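/- arXiv:2311.13669 — 2 statements merged into one kernel-verified Lean document; each statement's English description precedes it below -/
import Mathlib

section
/- Let l, p be integers with 2 ≤ p ≤ l − 2 and set μ = 2(l²p + 2lp(l+p−1) + (l+p−1)²)/(l² − 2p² + l(2p−1)). Then the system of four equations: (μ/(2(l+p−1)) − 1)·p(l−p) + (1 − μ/l)·(l−p)(l−p−1)/2 = 0; (μ/(2(l+p−1)) − 1)·p(l−p) + (μ/(3l+2p−2) − 1)·p(l−p) = 0; (μ/l − 1)·(l−p)(l−p−1)/2 + (μ/(3l+2p−2) − 1)·p(l−p) + (μ/(4l+2p−2) − 1)·p(p−1)/2 = 0; (μ/(4l+2p−2) − 1)·p(p−1)/2 = 0 has no solution. -/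
theorem stmt5 (l p : ℤ) (hp : 2 ≤ p) (hpl : p ≤ l - 2) (μ : ℝ)
    (hμ : μ = 2*((l:ℝ)^2*p + 2*(l:ℝ)*p*((l:ℝ)+p-1) + ((l:ℝ)+p-1)^2) /
      ((l:ℝ)^2 - 2*(p:ℝ)^2 + (l:ℝ)*(2*(p:ℝ)-1))) :
    ¬ ((μ/(2*((l:ℝ)+p-1)) - 1)*((p:ℝ)*((l:ℝ)-p)) + (1 - μ/(l:ℝ))*(((l:ℝ)-p)*((l:ℝ)-p-1)/2) = 0 ∧
       (μ/(2*((l:ℝ)+p-1)) - 1)*((p:ℝ)*((l:ℝ)-p)) + (μ/(3*(l:ℝ)+2*p-2) - 1)*((p:ℝ)*((l:ℝ)-p)) = 0 ∧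
       (μ/(l:ℝ) - 1)*(((l:ℝ)-p)*((l:ℝ)-p-1)/2) + (μ/(3*(l:ℝ)+2*p-2) - 1)*((p:ℝ)*((l:ℝ)-p)) +
         (μ/(4*(l:ℝ)+2*p-2) - 1)*((p:ℝ)*((p:ℝ)-1)/2) = 0 ∧
       (μ/(4*(l:ℝ)+2*p-2) - 1)*((p:ℝ)*((p:ℝ)-1)/2) = 0) := by
  rintro ⟨h1, h2, h3, h4⟩
  have hP : (2:ℝ) ≤ (p:ℝ) := by exact_mod_cast hp
  have hL : (p:ℝ) ≤ (l:ℝ) - 2 := by exact_mod_cast hpl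
  have hA : (0:ℝ) < 2*((l:ℝ)+p-1) := by linarith
  have hB : (0:ℝ) < 3*(l:ℝ)+2*p-2 := by linarith
  have hC : (0:ℝ) < 4*(l:ℝ)+2*p-2 := by linarith
  have hX : (0:ℝ) < (p:ℝ)*((l:ℝ)-p) := by nlinarith
  have hY : (0:ℝ) < (p:ℝ)*((p:ℝ)-1)/2 := by nlinarith
  have hμ4 : μ = 4*(l:ℝ)+2*p-2 := by
    rcases mul_eq_zero.1 h4 with h | h
    · have := sub_eq_zero.1 h
      field_simp at this
      linarith
    · linarith
  rw [hμ4] at h2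
  have t1 : (0:ℝ) < (4*(l:ℝ)+2*p-2)/(2*((l:ℝ)+p-1)) - 1 := by
    have : (1:ℝ) < (4*(l:ℝ)+2*p-2)/(2*((l:ℝ)+p-1)) :=
      (one_lt_div hA).2 (by linarith)
    linarith
  have t2 : (0:ℝ) < (4*(l:ℝ)+2*p-2)/(3*(l:ℝ)+2*p-2) - 1 := by
    have : (1:ℝ) < (4*(l:ℝ)+2*p-2)/(3*(l:ℝ)+2*p-2) :=
      (one_lt_div hB).2 (by linarith)
    linarith
  nlinarith [mul_pos t1 hX, mul_pos t2 hX]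
end

section
/- With μ = (568/13)/26 and coefficients c₁ = μ/2 − 1, c₂ = μ/8 − 1, c₃ = μ/10 − 1, c₄ = μ/18 − 1, the vector c₁·1·(e₂ − e₃) + c₂·10·(−(e₂+e₄+e₇)) + c₃·10·(−(e₃+e₄+e₇)) + c₄·5·(−(e₄+e₅+e₆)) is nonzero in ℝ⁸ (with e_i the standard basis). -/
/-- `e i` is the standard basis of `ℝ⁸ = Fin 8 → ℝ` (0-indexed: `e (i-1)` is the
paper's `e_i`). -/
theorem stmt6 (e : Fin 8 → (Fin 8 → ℝ)) (he : ∀ i, e i = Pi.single i 1)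
    (μ c₁ c₂ c₃ c₄ : ℝ) (hμ : μ = (568/13)/26)
    (h1 : c₁ = μ/2 - 1) (h2 : c₂ = μ/8 - 1) (h3 : c₃ = μ/10 - 1) (h4 : c₄ = μ/18 - 1) :
    (c₁ * 1) • (e 1 - e 2) + (c₂ * 10) • (-(e 1 + e 3 + e 6)) +
      (c₃ * 10) • (-(e 2 + e 3 + e 6)) + (c₄ * 5) • (-(e 3 + e 4 + e 5)) ≠ 0 := by
  intro h
  have := congrFun h 4
  simp only [he, Pi.add_apply, Pi.sub_apply, Pi.neg_apply, Pi.smul_apply, Pi.zero_apply,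
    smul_eq_mul] at this
  norm_num [Pi.single_apply, hμ, h1, h2, h3, h4, show (4:Fin 8) ≠ 1 by decide, show (4:Fin 8) ≠ 2 by decide, show (4:Fin 8) ≠ 3 by decide, show (4:Fin 8) ≠ 5 by decide, show (4:Fin 8) ≠ 6 by decide] at this
end
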